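/- arXiv:2509.20169 — 8 statements merged into one kernel-verified Lean document; each statement's English description precedes it below -/
import Mathlib

section
/- Let D be a commutative ring, V₀ a D-module, r a positive integer, and V = V₀ ⊗_D D[ℤ^r] the base change of V₀ to the group algebra D[ℤ^r] of the free abelian group ℤ^r (equivalently, the Laurent polynomial module V₀ ⊗_D D[X₁^{±1},…,X_r^{±1}]). Fix e ∈ ℤ^r with e ≠ 0, let Y ∈ D[ℤ^r] be the monomial supported at e with coefficient 1, let n ≥ 1 and a₀,…,a_{n−1} ∈ D, and set β = Yⁿ + a_{n−1}·Y^{n−1} + ⋯ + a₁·Y + a₀·1 ∈ D[ℤ^r]. Then multiplication by β on V is injective: if v ∈ V satisfies β·v = 0, then v = 0. -/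
/-!
Write an element of `R[G] ⊗ M` as a finitely supported function `G → M`; then multiplication by
`single h c` shifts it by `h` and scales by `c`. Choose an additive map `φ : ℤ^r → ℤ` with
`φ e > 0`: with respect to `φ`, the term `Yⁿ` of `β` strictly dominates all the others. If
`v ≠ 0` and `g₀` maximises `φ` on the support of `v`, then the only contribution to the
coefficient of `β • v` at `n • e + g₀` comes from `Yⁿ`, and it equals `v(g₀) ≠ 0`.
-/

open TensorProduct

namespace AddMonoidAlgebra

variable {R G M : Type*} [CommSemiring R] [AddCommMonoid M] [Module R M]

open scoped Classical in
noncomputable def tensorCoeffEquiv : R[G] ⊗[R] M ≃ₗ[R] (G →₀ M) :=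
  (LinearEquiv.rTensor M (coeffLinearEquiv R)).trans (finsuppScalarLeft R M G)

lemma tensorCoeffEquiv_tmul_apply (x : R[G]) (m : M) (g : G) :
    tensorCoeffEquiv (x ⊗ₜ[R] m) g = x.coeff g • m := by
  simp [tensorCoeffEquiv]

variable [AddGroup G]

lemma tensorCoeffEquiv_single_smul_apply (h : G) (c : R) (u : R[G] ⊗[R] M) (g : G) :
    tensorCoeffEquiv (single h c • u) g = c • tensorCoeffEquiv u (-h + g) := by
  induction u using TensorProduct.induction_on with
  | zero => simp
  | tmul x m =>
    rw [smul_tmul', smul_eq_mul, tensorCoeffEquiv_tmul_apply, tensorCoeffEquiv_tmul_apply,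
      coeff_single_mul_apply, mul_smul]
  | add u₁ u₂ h₁ h₂ => simp only [smul_add, map_add, Finsupp.add_apply, h₁, h₂]

lemma tensorCoeffEquiv_smul_apply (x : R[G]) (u : R[G] ⊗[R] M) (g : G) :
    tensorCoeffEquiv (x • u) g = x.coeff.sum fun h c ↦ c • tensorCoeffEquiv u (-h + g) := by
  induction x using induction_linear with
  | zero => simp
  | add x y hx hy =>
    rw [add_smul, map_add, Finsupp.add_apply, hx, hy, coeff_add,
      Finsupp.sum_add_index' (by simp) (by simp [add_smul])]
  | single h c =>
    rw [tensorCoeffEquiv_single_smul_apply, coeff_single,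
      Finsupp.sum_single_index (by rw [zero_smul])]

variable {Γ : Type*} [AddCommGroup Γ] [LinearOrder Γ] [IsOrderedAddMonoid Γ]

theorem eq_zero_of_single_add_smul_eq_zero (φ : G →+ Γ) (g₁ : G) {c : R} (hc : IsUnit c)
    (x : R[G]) (hx : ∀ h ∈ x.coeff.support, φ h < φ g₁) {v : R[G] ⊗[R] M}
    (hv : (single g₁ c + x) • v = 0) : v = 0 := by
  by_contra hne
  have hw : tensorCoeffEquiv v ≠ 0 := (LinearEquiv.map_ne_zero_iff _).mpr hne
  obtain ⟨g₀, hg₀, hmax⟩ := Finset.exists_max_image _ φ (Finsupp.support_nonempty_iff.mpr hw)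
  have htail : tensorCoeffEquiv (x • v) (g₁ + g₀) = 0 := by
    rw [tensorCoeffEquiv_smul_apply]
    refine Finset.sum_eq_zero fun h hh ↦ ?_
    have hlt : φ g₀ < φ (-h + (g₁ + g₀)) := by
      rw [map_add, map_add, map_neg, lt_neg_add_iff_add_lt]
      exact add_lt_add_left (hx h hh) _
    dsimp only
    rw [Finsupp.notMem_support_iff.mp fun hmem ↦ (hmax _ hmem).not_gt hlt, smul_zero]
  have hlead :
      tensorCoeffEquiv ((single g₁ c + x) • v) (g₁ + g₀) = c • tensorCoeffEquiv v g₀ := by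
    rw [add_smul, LinearEquiv.map_add, Finsupp.add_apply, htail, add_zero,
      tensorCoeffEquiv_single_smul_apply, neg_add_cancel_left]
  rw [hv, map_zero, Finsupp.zero_apply, eq_comm, hc.smul_eq_zero] at hlead
  exact Finsupp.mem_support_iff.mp hg₀ hlead

end AddMonoidAlgebra

lemma exists_addMonoidHom_pos {ι : Type*} {e : ι → ℤ} (he : e ≠ 0) :
    ∃ φ : (ι → ℤ) →+ ℤ, 0 < φ e := by
  obtain ⟨i, hi⟩ := Function.ne_iff.mp he
  exact ⟨(AddMonoidHom.mulLeft (e i)).comp (Pi.evalAddMonoidHom (fun _ ↦ ℤ) i),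
    mul_self_pos.mpr hi⟩

theorem mult_by_beta_injective_general
    (D : Type*) [CommRing D] (V₀ : Type*) [AddCommGroup V₀] [Module D V₀]
    (r : ℕ) (e : Fin r → ℤ) (he : e ≠ 0)
    (n : ℕ) (a : ℕ → D)
    (β : AddMonoidAlgebra D (Fin r → ℤ))
    (hβ : β = AddMonoidAlgebra.single (n • e) (1 : D)
        + ∑ k ∈ Finset.range n, AddMonoidAlgebra.single (k • e) (a k))
    (v : (AddMonoidAlgebra D (Fin r → ℤ)) ⊗[D] V₀)
    (hv : β • v = 0) :
    v = 0 := by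
  obtain ⟨φ, hφ⟩ := exists_addMonoidHom_pos he
  refine AddMonoidAlgebra.eq_zero_of_single_add_smul_eq_zero φ (n • e) isUnit_one _
    (fun h hh ↦ ?_) (hβ ▸ hv)
  rw [AddMonoidAlgebra.coeff_sum] at hh
  obtain ⟨k, hk, hh⟩ := Finset.mem_biUnion.mp (Finsupp.support_finsetSum hh)
  rw [Finset.mem_singleton.mp (Finsupp.support_single_subset hh), map_nsmul, map_nsmul]
  exact nsmul_lt_nsmul_left hφ (Finset.mem_range.mp hk)

/-- The lemma inside the proof of Theorem 3.1: over a commutative ring `D`, if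
`V = V₀ ⊗_D D[ℤ^r]` and `β = Yⁿ + a_{n-1} Y^{n-1} + ⋯ + a₀` where `Y` is the monomial
supported at `e ≠ 0` with coefficient `1` and `n ≥ 1`, then multiplication by `β` on `V`
is injective. -/
theorem mult_by_beta_injective
    (D : Type*) [CommRing D] (V₀ : Type*) [AddCommGroup V₀] [Module D V₀]
    (r : ℕ) (hr : 0 < r) (e : Fin r → ℤ) (he : e ≠ 0)
    (n : ℕ) (hn : 1 ≤ n) (a : ℕ → D)
    (β : AddMonoidAlgebra D (Fin r → ℤ))
    (hβ : β = AddMonoidAlgebra.single (n • e) (1 : D)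
        + ∑ k ∈ Finset.range n, AddMonoidAlgebra.single (k • e) (a k))
    (v : (AddMonoidAlgebra D (Fin r → ℤ)) ⊗[D] V₀)
    (hv : β • v = 0) :
    v = 0 :=
  mult_by_beta_injective_general D V₀ r e he n a β hβ v hv
end

section
/- Let A be a commutative ring, r a positive integer, λ ∈ ℤ^r with λ ≠ 0, d ≥ 0, and c₀,…,c_d ∈ A such that c₀ and c_d are units of A. Set s = Σ_{k=0}^{d} (monomial supported at k·λ with coefficient c_k) ∈ A[ℤ^r]. Then for every commutative A-algebra B, the image of s in B[ℤ^r] is a non-zero-divisor. In particular, s is a non-zero-divisor in A[ℤ^r], and for every ideal 𝔭 of A the image of s in (A/𝔭)[ℤ^r] is a non-zero-divisor. -/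
universe u v

/-!
Order `ℤ^r` lexicographically, or by the dual order, so that `0 < λ`. Then the exponents `k • λ`
increase with `k`, and the top monomial of `s` is `c_d X^{d • λ}`. If `x * s = 0` with `x ≠ 0`,
the coefficient of `x * s` at (top exponent of `x`) `+ d • λ` is reached by only one pair of
monomials, so it equals (top coefficient of `x`) `* c_d`, which cannot vanish as `c_d` is a unit.
-/

section OrderedCancelAddMonoid

variable {G : Type*} [AddCommMonoid G] [LinearOrder G] [IsOrderedCancelAddMonoid G]

theorem uniqueAdd_of_mem_upperBounds {s t : Finset G} {a₀ b₀ : G}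
    (ha₀ : a₀ ∈ upperBounds (s : Set G)) (hb₀ : b₀ ∈ upperBounds (t : Set G)) :
    UniqueAdd s t a₀ b₀ := fun _ _ ha hb hab =>
  (add_eq_add_iff_eq_and_eq (ha₀ ha) (hb₀ hb)).1 hab

namespace AddMonoidAlgebra

variable {R : Type*} [CommSemiring R]

theorem mem_nonZeroDivisors_of_mem_upperBounds_of_coeff_mem {p : R[G]} {b₀ : G}
    (hb₀ : b₀ ∈ upperBounds (p.coeff.support : Set G)) (hp : p.coeff b₀ ∈ nonZeroDivisors R) :
    p ∈ nonZeroDivisors R[G] := by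
  refine mem_nonZeroDivisors_iff_right.2 fun q hqp => ?_
  by_contra hq
  have hsupp : q.coeff.support.Nonempty := Finsupp.support_nonempty_iff.2 (mt coeff_eq_zero.1 hq)
  set a₀ := q.coeff.support.max' hsupp
  have htop : q.coeff a₀ * p.coeff b₀ = 0 := by
    rw [← coeff_mul_add_of_uniqueAdd (uniqueAdd_of_mem_upperBounds
      (fun _ ha => q.coeff.support.le_max' _ ha) hb₀), hqp]
    rfl
  exact Finsupp.mem_support_iff.1 (q.coeff.support.max'_mem hsupp)
    ((mul_right_mem_nonZeroDivisors_eq_zero_iff hp).1 htop)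

theorem sum_single_nsmul_mem_nonZeroDivisors_of_pos {g : G} (hg : 0 < g) (d : ℕ) (b : ℕ → R)
    (hbd : b d ∈ nonZeroDivisors R) :
    (∑ k ∈ Finset.range (d + 1), single (k • g) (b k)) ∈ nonZeroDivisors R[G] := by
  classical
  have hmono : StrictMono fun k : ℕ => k • g := nsmul_left_strictMono hg
  refine mem_nonZeroDivisors_of_mem_upperBounds_of_coeff_mem (b₀ := d • g) (fun a ha => ?_) ?_
  · rw [coeff_sum] at ha
    obtain ⟨k, hk, hak⟩ := Finset.mem_biUnion.1 (Finsupp.support_finsetSum ha)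
    obtain rfl := Finset.mem_singleton.1 (Finsupp.support_single_subset hak)
    exact hmono.monotone (Finset.mem_range_succ_iff.1 hk)
  · rw [coeff_sum, Finsupp.finsetSum_apply,
      Finset.sum_eq_single_of_mem d (Finset.self_mem_range_succ d)]
    · simpa [coeff_single] using hbd
    · intro k _ hkd
      simp [coeff_single, hmono.injective.ne hkd]

theorem sum_single_nsmul_mem_nonZeroDivisors {g : G} (hg : g ≠ 0) (d : ℕ) (b : ℕ → R)
    (hbd : b d ∈ nonZeroDivisors R) :
    (∑ k ∈ Finset.range (d + 1), single (k • g) (b k)) ∈ nonZeroDivisors R[G] := by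
  rcases hg.lt_or_gt with hneg | hpos
  · exact sum_single_nsmul_mem_nonZeroDivisors_of_pos (G := Gᵒᵈ) hneg d b hbd
  · exact sum_single_nsmul_mem_nonZeroDivisors_of_pos hpos d b hbd

end AddMonoidAlgebra

end OrderedCancelAddMonoid

theorem mult_set_preserves_congruences_general
    (A : Type u) [CommRing A]
    (r : ℕ) (lam : Fin r → ℤ) (hlam : lam ≠ 0)
    (d : ℕ) (c : ℕ → A) (hcd : IsUnit (c d)) :
    (∀ (B : Type v), ∀ (_ : CommRing B) (_ : Algebra A B),
      (∑ k ∈ Finset.range (d + 1),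
          AddMonoidAlgebra.single (k • lam) (algebraMap A B (c k)))
        ∈ nonZeroDivisors (AddMonoidAlgebra B (Fin r → ℤ)))
    ∧ ((∑ k ∈ Finset.range (d + 1), AddMonoidAlgebra.single (k • lam) (c k))
        ∈ nonZeroDivisors (AddMonoidAlgebra A (Fin r → ℤ)))
    ∧ ∀ (𝔭 : Ideal A),
      (∑ k ∈ Finset.range (d + 1),
          AddMonoidAlgebra.single (k • lam) (Ideal.Quotient.mk 𝔭 (c k)))
        ∈ nonZeroDivisors (AddMonoidAlgebra (A ⧸ 𝔭) (Fin r → ℤ)) := by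
  refine ⟨fun B _ _ => ?_, ?_, fun 𝔭 => ?_⟩ <;>
    refine AddMonoidAlgebra.sum_single_nsmul_mem_nonZeroDivisors (G := Lex (Fin r → ℤ))
      (g := toLex lam) hlam d _ (IsUnit.mem_nonZeroDivisors ?_)
  exacts [hcd.map (algebraMap A B), hcd, hcd.map (Ideal.Quotient.mk 𝔭)]

/-- The Observation in Section 3.3: an element of the multiplicative set `S ⊆ A[ℤ^r]`
of the form `s = Σ_{k=0}^{d} c_k · X^{k·λ}` with `λ ≠ 0` and `c₀, c_d ∈ A^×` is a
non-zero-divisor after every extension of scalars; in particular `s` is a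
non-zero-divisor in `A[ℤ^r]`, and its image in `(A/𝔭)[ℤ^r]` is a non-zero-divisor
for every ideal `𝔭` of `A`. -/
theorem mult_set_preserves_congruences
    (A : Type u) [CommRing A]
    (r : ℕ) (hr : 0 < r) (lam : Fin r → ℤ) (hlam : lam ≠ 0)
    (d : ℕ) (c : ℕ → A) (hc0 : IsUnit (c 0)) (hcd : IsUnit (c d)) :
    (∀ (B : Type v), ∀ (_ : CommRing B) (_ : Algebra A B),
      (∑ k ∈ Finset.range (d + 1),
          AddMonoidAlgebra.single (k • lam) (algebraMap A B (c k)))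
        ∈ nonZeroDivisors (AddMonoidAlgebra B (Fin r → ℤ)))
    ∧ ((∑ k ∈ Finset.range (d + 1), AddMonoidAlgebra.single (k • lam) (c k))
        ∈ nonZeroDivisors (AddMonoidAlgebra A (Fin r → ℤ)))
    ∧ ∀ (𝔭 : Ideal A),
      (∑ k ∈ Finset.range (d + 1),
          AddMonoidAlgebra.single (k • lam) (Ideal.Quotient.mk 𝔭 (c k)))
        ∈ nonZeroDivisors (AddMonoidAlgebra (A ⧸ 𝔭) (Fin r → ℤ)) :=
  mult_set_preserves_congruences_general A r lam hlam d c hcd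
end

section
/- Let A be a commutative ring, M a group, B an A-algebra that is free as an A-module, and V, W modules over the group algebra A[M]. If V is finitely generated as an A[M]-module, then the natural B-module map Hom_{A[M]}(V, W) ⊗_A B → Hom_{B[M]}(V ⊗_A B, W ⊗_A B), sending φ ⊗ b to the B[M]-linear map determined by v ⊗ b′ ↦ φ(v) ⊗ b·b′, is bijective. -/
/-!
Choose an `A`-basis `(e_i)` of `B`. For every `A`-module `X`, coordinates in this basis identify
`X ⊗_A B` with `ι →₀ X`, compatibly with the action of `M`. A `B[M]`-linear map
`F : V ⊗_A B → W ⊗_A B` is determined by `v ↦ F (v ⊗ 1)`, hence by its coordinates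
`F_i ∈ Hom_{A[M]}(V, W)`, and the natural map sends `∑ φ_i ⊗ e_i` to the map with coordinates
`(φ_i)`. So it is injective, and its image consists of the `F` with finitely many nonzero
coordinates. When `V` is generated by a finite set `S`, `F_i ≠ 0` forces `F (s ⊗ 1)` to have a
nonzero `i`-th coordinate for some `s ∈ S`, which happens for only finitely many `i`.
-/

open TensorProduct

section

variable {A : Type*} [CommRing A] {M : Type*} [Group M]
variable {B : Type*} [CommRing B] [Algebra A B]
variable {V : Type*} [AddCommGroup V] [Module A V] [Module (MonoidAlgebra A M) V]
  [IsScalarTower A (MonoidAlgebra A M) V]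

/-- The action of `m : M` on an `A[M]`-module as an `A`-linear endomorphism. -/
noncomputable def mAct (m : M) : V →ₗ[A] V where
  toFun v := MonoidAlgebra.of A M m • v
  map_add' _ _ := smul_add _ _ _
  map_smul' a v := smul_comm (MonoidAlgebra.of A M m) a v

lemma mAct_one : mAct (A := A) (M := M) (V := V) 1 = LinearMap.id := by
  ext v
  show MonoidAlgebra.of A M 1 • v = v
  rw [map_one, one_smul]

lemma mAct_mul (m n : M) :
    mAct (A := A) (M := M) (V := V) (m * n)
      = (mAct (A := A) (V := V) m) ∘ₗ (mAct (A := A) (V := V) n) := by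
  ext v
  show MonoidAlgebra.of A M (m * n) • v = MonoidAlgebra.of A M m • (MonoidAlgebra.of A M n • v)
  rw [map_mul, mul_smul]

/-- The base change to `B` of the `M`-action on `V`: the representation of `M` on
`V ⊗_A B = B ⊗[A] V` by `B`-linear endomorphisms, where `M` acts on the factor `V`. -/
noncomputable def bcRep : M →* Module.End B (B ⊗[A] V) where
  toFun m := LinearMap.baseChange B (mAct (A := A) (M := M) (V := V) m)
  map_one' := by
    show LinearMap.baseChange B (mAct (A := A) (M := M) (V := V) 1) = 1
    rw [mAct_one]
    exact LinearMap.baseChange_id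
  map_mul' m n := by
    show LinearMap.baseChange B (mAct (A := A) (M := M) (V := V) (m * n)) = _
    rw [mAct_mul]
    exact LinearMap.baseChange_comp _ _

/-- The `B[M]`-module structure on `V ⊗_A B = B ⊗[A] V` obtained by base change from
the `A[M]`-module `V`: `M` acts on the tensor factor `V` and `B` on the tensor
factor `B`. -/
noncomputable instance bcModule : Module (MonoidAlgebra B M) (B ⊗[A] V) :=
  Module.compHom (B ⊗[A] V)
    ((MonoidAlgebra.lift B (Module.End B (B ⊗[A] V)) M)
      (bcRep (A := A) (M := M) (B := B) (V := V))).toRingHom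

lemma bc_smul_def (s : MonoidAlgebra B M) (y : B ⊗[A] V) :
    s • y = ((MonoidAlgebra.lift B (Module.End B (B ⊗[A] V)) M)
      (bcRep (A := A) (M := M) (B := B) (V := V)) s) y := rfl

variable {W : Type*} [AddCommGroup W] [Module A W] [Module (MonoidAlgebra A M) W]
  [IsScalarTower A (MonoidAlgebra A M) W]

lemma restrict_comm (φ : V →ₗ[MonoidAlgebra A M] W) (m : M) :
    (LinearMap.restrictScalars A φ) ∘ₗ (mAct (A := A) (V := V) m)
      = (mAct (A := A) (V := W) m) ∘ₗ (LinearMap.restrictScalars A φ) := by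
  ext v
  show φ (MonoidAlgebra.of A M m • v) = MonoidAlgebra.of A M m • φ v
  exact map_smul φ _ v

lemma baseChange_equivariant (φ : V →ₗ[MonoidAlgebra A M] W)
    (s : MonoidAlgebra B M) (x : B ⊗[A] V) :
    LinearMap.baseChange B (LinearMap.restrictScalars A φ) (s • x)
      = s • (LinearMap.baseChange B (LinearMap.restrictScalars A φ) x) := by
  rw [bc_smul_def, bc_smul_def]
  induction s using MonoidAlgebra.induction_on with
  | of m =>
      rw [MonoidAlgebra.lift_of, MonoidAlgebra.lift_of]
      show (LinearMap.baseChange B (LinearMap.restrictScalars A φ) ∘ₗ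
        LinearMap.baseChange B (mAct (A := A) (V := V) m)) x
        = (LinearMap.baseChange B (mAct (A := A) (V := W) m) ∘ₗ
          LinearMap.baseChange B (LinearMap.restrictScalars A φ)) x
      rw [← LinearMap.baseChange_comp, ← LinearMap.baseChange_comp, restrict_comm]
  | add f g hf hg =>
      rw [map_add, map_add, LinearMap.add_apply, LinearMap.add_apply, map_add, hf, hg]
  | smul r f hf =>
      rw [map_smul, map_smul, LinearMap.smul_apply, LinearMap.smul_apply, map_smul, hf]

/-- `φ ⊗ b` induces a `B[M]`-linear map `V ⊗_A B → W ⊗_A B`, determined by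
`v ⊗ b' ↦ φ(v) ⊗ b·b'`. -/
noncomputable def pairMap (φ : V →ₗ[MonoidAlgebra A M] W) (b : B) :
    (B ⊗[A] V) →ₗ[MonoidAlgebra B M] (B ⊗[A] W) where
  toFun x := b • (LinearMap.baseChange B (LinearMap.restrictScalars A φ) x)
  map_add' x y := by
    show b • _ = b • _ + b • _
    rw [map_add, smul_add]
  map_smul' s x := by
    simp only [RingHom.id_apply]
    rw [baseChange_equivariant, bc_smul_def, bc_smul_def, map_smul]

lemma pairMap_apply (φ : V →ₗ[MonoidAlgebra A M] W) (b : B) (x : B ⊗[A] V) :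
    pairMap φ b x = b • (LinearMap.baseChange B (LinearMap.restrictScalars A φ) x) := rfl

/-- The natural map `Hom_{A[M]}(V, W) ⊗_A B → Hom_{B[M]}(V ⊗_A B, W ⊗_A B)` sending
`φ ⊗ b` to the `B[M]`-linear map determined by `v ⊗ b' ↦ φ(v) ⊗ b·b'`. -/
noncomputable def natBaseChangeHom :
    ((V →ₗ[MonoidAlgebra A M] W) ⊗[A] B) →+
      ((B ⊗[A] V) →ₗ[MonoidAlgebra B M] (B ⊗[A] W)) :=
  TensorProduct.liftAddHom
    { toFun := fun φ =>
        { toFun := fun b => pairMap φ b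
          map_zero' := LinearMap.ext fun x => by
            rw [pairMap_apply, zero_smul]; rfl
          map_add' := fun b b' => LinearMap.ext fun x => by
            rw [pairMap_apply, add_smul]; rfl }
      map_zero' := AddMonoidHom.ext fun b => LinearMap.ext fun x => by
        show pairMap 0 b x = 0
        rw [pairMap_apply, LinearMap.restrictScalars_zero]
        simp
      map_add' := fun φ ψ => AddMonoidHom.ext fun b => LinearMap.ext fun x => by
        show pairMap (φ + ψ) b x = pairMap φ b x + pairMap ψ b x
        rw [pairMap_apply, pairMap_apply, pairMap_apply,
          LinearMap.restrictScalars_add, LinearMap.baseChange_add]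
        rw [LinearMap.add_apply, smul_add] }
    (fun a φ b => LinearMap.ext fun x => by
      show pairMap (a • φ) b x = pairMap φ (a • b) x
      rw [pairMap_apply, pairMap_apply, LinearMap.restrictScalars_smul,
        LinearMap.baseChange_smul, LinearMap.smul_apply, smul_comm b a, smul_assoc])

lemma TensorProduct.equivFinsuppOfBasisLeft_lTensor {R P Q N : Type*} [CommSemiring R]
    [AddCommMonoid P] [Module R P] [AddCommMonoid Q] [Module R Q]
    [AddCommMonoid N] [Module R N] {ι : Type*} [DecidableEq ι] (ℬ : Module.Basis ι R N)
    (f : P →ₗ[R] Q) (x : N ⊗[R] P) (i : ι) :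
    equivFinsuppOfBasisLeft ℬ (f.lTensor N x) i = f (equivFinsuppOfBasisLeft ℬ x i) := by
  induction x <;> simp_all

instance isScalarTower_bcModule : IsScalarTower B (MonoidAlgebra B M) (B ⊗[A] V) :=
  ⟨fun b s x => by rw [bc_smul_def, bc_smul_def, map_smul]; rfl⟩

lemma of_smul_eq_baseChange_mAct (m : M) (x : B ⊗[A] V) :
    MonoidAlgebra.of B M m • x = (mAct (A := A) (V := V) m).baseChange B x := by
  rw [bc_smul_def, MonoidAlgebra.lift_of]; rfl

lemma of_smul_one_tmul (m : M) (v : V) :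
    MonoidAlgebra.of B M m • ((1 : B) ⊗ₜ[A] v)
      = (1 : B) ⊗ₜ[A] (MonoidAlgebra.of A M m • v) := by
  rw [of_smul_eq_baseChange_mAct, LinearMap.baseChange_tmul]; rfl

lemma natBaseChangeHom_tmul_tmul (φ : V →ₗ[MonoidAlgebra A M] W) (b b' : B) (v : V) :
    natBaseChangeHom (φ ⊗ₜ[A] b) (b' ⊗ₜ[A] v) = (b * b') ⊗ₜ[A] φ v := by
  rw [natBaseChangeHom, TensorProduct.liftAddHom_tmul]
  show pairMap φ b _ = _
  rw [pairMap_apply, LinearMap.baseChange_tmul, TensorProduct.smul_tmul', smul_eq_mul]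
  rfl

lemma linearMap_ext_of_one_tmul {F G : (B ⊗[A] V) →ₗ[MonoidAlgebra B M] (B ⊗[A] W)}
    (h : ∀ v : V, F ((1 : B) ⊗ₜ[A] v) = G ((1 : B) ⊗ₜ[A] v)) : F = G :=
  LinearMap.restrictScalars_injective B
    ((LinearMap.liftBaseChangeEquiv B).symm.injective (LinearMap.ext h))

section Components

variable {ι : Type*} [DecidableEq ι] (e : Module.Basis ι A B)

noncomputable def baseChangeComponent (F : (B ⊗[A] V) →ₗ[MonoidAlgebra B M] (B ⊗[A] W))
    (i : ι) : V →ₗ[MonoidAlgebra A M] W :=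
  MonoidAlgebra.equivariantOfLinearOfComm
    (Finsupp.lapply i ∘ₗ (equivFinsuppOfBasisLeft e).toLinearMap ∘ₗ
      (LinearMap.liftBaseChangeEquiv B).symm (F.restrictScalars B))
    fun m v => by
      change equivFinsuppOfBasisLeft e (F (1 ⊗ₜ[A] (MonoidAlgebra.of A M m • v))) i
        = MonoidAlgebra.of A M m • equivFinsuppOfBasisLeft e (F (1 ⊗ₜ[A] v)) i
      rw [← of_smul_one_tmul, map_smul, of_smul_eq_baseChange_mAct,
        LinearMap.baseChange_eq_ltensor, equivFinsuppOfBasisLeft_lTensor]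
      rfl

lemma baseChangeComponent_apply (F : (B ⊗[A] V) →ₗ[MonoidAlgebra B M] (B ⊗[A] W))
    (i : ι) (v : V) :
    baseChangeComponent e F i v = equivFinsuppOfBasisLeft e (F ((1 : B) ⊗ₜ[A] v)) i :=
  rfl

lemma baseChangeComponent_injective :
    Function.Injective (baseChangeComponent (V := V) (W := W) (M := M) e) := fun F G h =>
  linearMap_ext_of_one_tmul fun v =>
    (equivFinsuppOfBasisLeft e).injective <| Finsupp.ext fun i => by
      simpa only [baseChangeComponent_apply] using congr($h i v)

lemma baseChangeComponent_natBaseChangeHom (x : (V →ₗ[MonoidAlgebra A M] W) ⊗[A] B) :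
    baseChangeComponent e (natBaseChangeHom x) = ⇑(equivFinsuppOfBasisRight e x) := by
  ext i v
  rw [baseChangeComponent_apply]
  induction x with
  | zero => simp
  | tmul φ b => simp [natBaseChangeHom_tmul_tmul]
  | add x y hx hy => simp [hx, hy]

lemma finite_support_baseChangeComponent [Module.Finite (MonoidAlgebra A M) V]
    (F : (B ⊗[A] V) →ₗ[MonoidAlgebra B M] (B ⊗[A] W)) :
    (Function.support (baseChangeComponent e F)).Finite := by
  obtain ⟨S, hS⟩ := Module.Finite.fg_top (R := MonoidAlgebra A M) (M := V)
  refine (S.finite_toSet.biUnion fun v _ =>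
    (equivFinsuppOfBasisLeft e (F ((1 : B) ⊗ₜ[A] v))).support.finite_toSet).subset ?_
  intro i hi
  contrapose! hi
  rw [Function.notMem_support]
  refine LinearMap.ext_on hS fun v hv => ?_
  simp only [Set.mem_iUnion, Finset.mem_coe, Finsupp.mem_support_iff, not_exists,
    not_not] at hi
  exact hi v hv

end Components

/-- The finitely generated case of Proposition 2.5: if `B` is an `A`-algebra that is
free as an `A`-module and `V` is a finitely generated `A[M]`-module, then the natural
map `Hom_{A[M]}(V, W) ⊗_A B → Hom_{B[M]}(V ⊗_A B, W ⊗_A B)`, sending `φ ⊗ b` to the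
`B[M]`-linear map determined by `v ⊗ b' ↦ φ(v) ⊗ b·b'`, is bijective. -/
theorem natBaseChangeHom_bijective_of_finite
    [Module.Free A B] [Module.Finite (MonoidAlgebra A M) V] :
    Function.Bijective
      ⇑(natBaseChangeHom (A := A) (M := M) (B := B) (V := V) (W := W)) := by
  classical
  let e := Module.Free.chooseBasis A B
  have hcomp := baseChangeComponent_natBaseChangeHom (V := V) (W := W) (M := M) e
  refine ⟨fun x y hxy => (equivFinsuppOfBasisRight e).injective
    (DFunLike.coe_injective ?_), fun F => ?_⟩
  · rw [← hcomp, ← hcomp, hxy]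
  · obtain ⟨x, hx⟩ := (equivFinsuppOfBasisRight e).surjective
      (Finsupp.ofSupportFinite _ (finite_support_baseChangeComponent e F))
    exact ⟨x, baseChangeComponent_injective e (by rw [hcomp, hx]; rfl)⟩

end
end

section
/- Let A be a commutative ring, M a group, and B an A-algebra that is finitely generated and free as an A-module. Then for all modules V and W over the group algebra A[M], the natural B-module map Hom_{A[M]}(V, W) ⊗_A B → Hom_{B[M]}(V ⊗_A B, W ⊗_A B), sending φ ⊗ b to the B[M]-linear map determined by v ⊗ b′ ↦ φ(v) ⊗ b·b′, is bijective. -/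
/-! A basis `(b i)` of `B` over `A`, indexed by a finite type `ι`, identifies both sides with
`ι → Hom_{A[M]}(V, W)`. A tensor `∑ i, φ i ⊗ b i` goes to the map `1 ⊗ v ↦ ∑ i, b i ⊗ φ i v`;
conversely a `B[M]`-linear `f` is determined by its values on `1 ⊗ v`, and the `b i`-coordinates
of `f (1 ⊗ v)` are `A[M]`-linear in `v` because `M` acts on `B ⊗ W` through the factor `W`, hence
coordinatewise. Finiteness of `ι` is what makes this family of coordinates a tensor. -/

open TensorProduct

section

variable {A : Type*} [CommRing A] {M : Type*} [Group M]
variable {B : Type*} [CommRing B] [Algebra A B]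
variable {V : Type*} [AddCommGroup V] [Module A V] [Module (MonoidAlgebra A M) V]
  [IsScalarTower A (MonoidAlgebra A M) V]

variable {W : Type*} [AddCommGroup W] [Module A W] [Module (MonoidAlgebra A M) W]
  [IsScalarTower A (MonoidAlgebra A M) W]

section TensorBasis

variable {R : Type*} [CommSemiring R] {P N N' : Type*} [AddCommMonoid P] [Module R P]
  [AddCommMonoid N] [Module R N] [AddCommMonoid N'] [Module R N']
  {ι : Type*} [Fintype ι]

theorem Module.Basis.bijective_sum_tmul (𝓑 : Module.Basis ι R P) :
    Function.Bijective fun c : ι → N => ∑ i, c i ⊗ₜ[R] 𝓑 i := by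
  classical
  convert ((Finsupp.linearEquivFunOnFinite R N ι).symm ≪≫ₗ
    (TensorProduct.equivFinsuppOfBasisRight 𝓑).symm).bijective with c
  simp [Finsupp.sum_fintype]

variable [DecidableEq ι] (𝓑 : Module.Basis ι R P)

noncomputable def Module.Basis.tensorEquivPiLeft : P ⊗[R] N ≃ₗ[R] (ι → N) :=
  TensorProduct.equivFinsuppOfBasisLeft 𝓑 ≪≫ₗ Finsupp.linearEquivFunOnFinite R N ι

theorem Module.Basis.tensorEquivPiLeft_symm_apply (c : ι → N) :
    𝓑.tensorEquivPiLeft.symm c = ∑ i, 𝓑 i ⊗ₜ[R] c i := by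
  simp [Module.Basis.tensorEquivPiLeft, Finsupp.sum_fintype]

theorem Module.Basis.tensorEquivPiLeft_lTensor (ψ : N →ₗ[R] N') (x : P ⊗[R] N) (i : ι) :
    𝓑.tensorEquivPiLeft (ψ.lTensor P x) i = ψ (𝓑.tensorEquivPiLeft x i) := by
  induction x using TensorProduct.induction_on with
  | zero => simp
  | tmul p n => simp [Module.Basis.tensorEquivPiLeft]
  | add x y hx hy => simp_all

end TensorBasis

theorem bc_single_one_smul (b : B) (x : B ⊗[A] V) :
    MonoidAlgebra.single (1 : M) b • x = b • x := by
  rw [bc_smul_def, MonoidAlgebra.lift_single, map_one]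
  rfl

instance : IsScalarTower B (MonoidAlgebra B M) (B ⊗[A] V) :=
  IsScalarTower.of_algebraMap_smul fun b x => bc_single_one_smul b x

theorem bc_of_smul (m : M) (x : B ⊗[A] V) :
    MonoidAlgebra.of B M m • x = (mAct (A := A) (V := V) m).lTensor B x := by
  rw [bc_smul_def, MonoidAlgebra.lift_of, ← LinearMap.baseChange_eq_ltensor]
  rfl

theorem bc_hom_ext {f g : B ⊗[A] V →ₗ[MonoidAlgebra B M] B ⊗[A] W}
    (h : ∀ v, f (1 ⊗ₜ v) = g (1 ⊗ₜ v)) : f = g := by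
  refine LinearMap.restrictScalars_injective B (TensorProduct.AlgebraTensorModule.ext fun b v => ?_)
  rw [← mul_one b, ← smul_eq_mul, ← TensorProduct.smul_tmul']
  simp only [LinearMap.restrictScalars_apply, LinearMap.map_smul_of_tower, h]

theorem natBaseChangeHom_tmul_apply_one_tmul (φ : V →ₗ[MonoidAlgebra A M] W) (b : B) (v : V) :
    natBaseChangeHom (φ ⊗ₜ[A] b) (1 ⊗ₜ[A] v) = b ⊗ₜ[A] φ v := by
  show b • ((1 : B) ⊗ₜ[A] φ v) = _
  rw [TensorProduct.smul_tmul', smul_eq_mul, mul_one]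

section Basis

variable {ι : Type*} [Fintype ι] [DecidableEq ι] (𝓑 : Module.Basis ι A B)

noncomputable def bcHomCoord (f : B ⊗[A] V →ₗ[MonoidAlgebra B M] B ⊗[A] W) (i : ι) :
    V →ₗ[MonoidAlgebra A M] W :=
  MonoidAlgebra.equivariantOfLinearOfComm
    (LinearMap.proj i ∘ₗ 𝓑.tensorEquivPiLeft.toLinearMap ∘ₗ
      (f.restrictScalars B).restrictScalars A ∘ₗ TensorProduct.mk A B V 1)
    fun m v => by
      have hv : (1 : B) ⊗ₜ[A] (MonoidAlgebra.single m (1 : A) • v) =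
          MonoidAlgebra.of B M m • (1 ⊗ₜ v) := by
        rw [bc_of_smul, LinearMap.lTensor_tmul]
        rfl
      simp only [LinearMap.coe_comp, Function.comp_apply, TensorProduct.mk_apply,
        LinearMap.restrictScalars_apply, LinearEquiv.coe_coe, LinearMap.coe_proj, Function.eval]
      rw [hv, map_smul, bc_of_smul, Module.Basis.tensorEquivPiLeft_lTensor]
      rfl

theorem bcHomCoord_apply (f : B ⊗[A] V →ₗ[MonoidAlgebra B M] B ⊗[A] W) (i : ι) (v : V) :
    bcHomCoord 𝓑 f i v = 𝓑.tensorEquivPiLeft (f (1 ⊗ₜ v)) i := rfl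

theorem natBaseChangeHom_sum_tmul_basis_eq_iff (c : ι → V →ₗ[MonoidAlgebra A M] W)
    (f : B ⊗[A] V →ₗ[MonoidAlgebra B M] B ⊗[A] W) :
    natBaseChangeHom (∑ i, c i ⊗ₜ[A] 𝓑 i) = f ↔ bcHomCoord 𝓑 f = c := by
  have hΦ : ∀ v, natBaseChangeHom (∑ i, c i ⊗ₜ[A] 𝓑 i) (1 ⊗ₜ v) =
      𝓑.tensorEquivPiLeft.symm fun i => c i v := by
    intro v
    simp [Module.Basis.tensorEquivPiLeft_symm_apply, natBaseChangeHom_tmul_apply_one_tmul]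
  constructor
  · rintro rfl
    ext i v
    rw [bcHomCoord_apply, hΦ, LinearEquiv.apply_symm_apply]
  · rintro rfl
    refine bc_hom_ext fun v => ?_
    rw [hΦ, LinearEquiv.symm_apply_eq]
    rfl

theorem natBaseChangeHom_sum_tmul_basis_bijective :
    Function.Bijective fun c : ι → V →ₗ[MonoidAlgebra A M] W =>
      natBaseChangeHom (∑ i, c i ⊗ₜ[A] 𝓑 i) :=
  (Function.bijective_iff_existsUnique _).2 fun f =>
    ⟨bcHomCoord 𝓑 f, (natBaseChangeHom_sum_tmul_basis_eq_iff 𝓑 _ f).2 rfl,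
      fun c hc => ((natBaseChangeHom_sum_tmul_basis_eq_iff 𝓑 c f).1 hc).symm⟩

end Basis

/-- The finite free case of Proposition 2.5: if `B` is an `A`-algebra that is finitely
generated and free as an `A`-module, then for all `A[M]`-modules `V` and `W` the
natural map `Hom_{A[M]}(V, W) ⊗_A B → Hom_{B[M]}(V ⊗_A B, W ⊗_A B)`, sending `φ ⊗ b`
to the `B[M]`-linear map determined by `v ⊗ b' ↦ φ(v) ⊗ b·b'`, is bijective. -/
theorem natBaseChangeHom_bijective_of_finite_free
    [Module.Free A B] [Module.Finite A B] :
    Function.Bijective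
      ⇑(natBaseChangeHom (A := A) (M := M) (B := B) (V := V) (W := W)) := by
  classical
  let 𝓑 := Module.Free.chooseBasis A B
  exact (Function.Bijective.of_comp_iff _ 𝓑.bijective_sum_tmul).1
    (natBaseChangeHom_sum_tmul_basis_bijective 𝓑)

end
end

section
/- Let A be a commutative ring, M a group, and B an A-algebra that is free as an A-module. Then for all modules V and W over the group algebra A[M], the natural B-module map Hom_{A[M]}(V, W) ⊗_A B → Hom_{B[M]}(V ⊗_A B, W ⊗_A B), sending φ ⊗ b to the B[M]-linear map determined by v ⊗ b′ ↦ φ(v) ⊗ b·b′, is injective. -/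
/-!
Write `x = ∑ φᵢ ⊗ bᵢ` with `(bᵢ)` an `A`-basis of `B`. Its image sends `1 ⊗ v` to
`∑ bᵢ ⊗ φᵢ v`, so if the image vanishes then `φᵢ v = 0` for every `i` and every `v`,
i.e. every `φᵢ` is zero.
-/

open TensorProduct

section

variable {A : Type*} [CommRing A] {M : Type*} [Group M]
variable {B : Type*} [CommRing B] [Algebra A B]
variable {V : Type*} [AddCommGroup V] [Module A V] [Module (MonoidAlgebra A M) V]
  [IsScalarTower A (MonoidAlgebra A M) V]

variable {W : Type*} [AddCommGroup W] [Module A W] [Module (MonoidAlgebra A M) W]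
  [IsScalarTower A (MonoidAlgebra A M) W]

namespace TensorProduct

variable {R N P Q : Type*} [CommRing R] [AddCommGroup N] [Module R N] [AddCommGroup P]
  [Module R P] [AddCommGroup Q] [Module R Q]

lemma equivFinsuppOfBasisRight_rTensor {κ : Type*} [DecidableEq κ] (𝒞 : Module.Basis κ R Q)
    (f : N →ₗ[R] P) (x : N ⊗[R] Q) (i : κ) :
    equivFinsuppOfBasisRight 𝒞 (f.rTensor Q x) i = f (equivFinsuppOfBasisRight 𝒞 x i) := by
  induction x <;> simp_all

-- Flatness of `Q` would not suffice for infinite `ι`; a basis reduces this to coordinates.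
lemma eq_zero_of_forall_rTensor_eq_zero [Module.Free R Q] {ι : Type*} {f : ι → N →ₗ[R] P}
    (hf : ∀ n, (∀ i, f i n = 0) → n = 0) {x : N ⊗[R] Q}
    (hx : ∀ i, (f i).rTensor Q x = 0) : x = 0 := by
  classical
  let e := equivFinsuppOfBasisRight (Module.Free.chooseBasis R Q) (M := N)
  rw [← e.map_eq_zero_iff]
  ext j
  refine hf _ fun i => ?_
  rw [← equivFinsuppOfBasisRight_rTensor, hx i, map_zero, Finsupp.coe_zero, Pi.zero_apply]

end TensorProduct

lemma natBaseChangeHom_apply_one_tmul (x : (V →ₗ[MonoidAlgebra A M] W) ⊗[A] B) (v : V) :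
    natBaseChangeHom x (1 ⊗ₜ v) =
      TensorProduct.comm A W B ((LinearMap.applyₗ' A v).rTensor B x) := by
  induction x with
  | zero => simp
  | tmul φ b =>
    show b • (1 ⊗ₜ[A] φ v) = b ⊗ₜ φ v
    rw [smul_tmul', smul_eq_mul, mul_one]
  | add x y hx hy => simp only [map_add, LinearMap.add_apply, hx, hy]

/-- The injectivity assertion in the proof of Proposition 2.5: if `B` is an `A`-algebra
that is free as an `A`-module, then for all `A[M]`-modules `V` and `W` the natural map
`Hom_{A[M]}(V, W) ⊗_A B → Hom_{B[M]}(V ⊗_A B, W ⊗_A B)`, sending `φ ⊗ b` to the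
`B[M]`-linear map determined by `v ⊗ b' ↦ φ(v) ⊗ b·b'`, is injective. -/
theorem natBaseChangeHom_injective [Module.Free A B] :
    Function.Injective
      ⇑(natBaseChangeHom (A := A) (M := M) (B := B) (V := V) (W := W)) := by
  refine (injective_iff_map_eq_zero _).2 fun x hx =>
    TensorProduct.eq_zero_of_forall_rTensor_eq_zero (f := fun v => LinearMap.applyₗ' A v)
      (fun φ hφ => LinearMap.ext hφ) fun v => (TensorProduct.comm A W B).injective ?_
  rw [← natBaseChangeHom_apply_one_tmul, hx, LinearMap.zero_apply, map_zero]

end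
end

section
/- Let Z be a commutative ring and E a (possibly noncommutative) Z-algebra that is finitely generated as a Z-module. For every unit u of E there exist an integer d ≥ 1 and elements b₀, b₁, …, b_{d−1} ∈ Z with b₀ a unit of Z such that u^d + b_{d−1}·u^{d−1} + ⋯ + b₁·u + b₀·1 = 0 in E. Equivalently, every invertible element of E is annihilated by a monic polynomial over Z whose constant coefficient is a unit of Z. -/
/-!
Since `E` is a finite `Z`-module, both `u` and `u⁻¹` are integral over `Z`. Reversing a monic
equation of `u⁻¹` gives a polynomial `h` with `h(u) = 0` and `h(0) = 1`; adding `X ^ N * p`, where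
`p` is monic with `p(u) = 0` and `N > deg h`, makes it monic without changing its constant
coefficient.
-/

open Polynomial

namespace Polynomial

section Semiring

variable {R A : Type*} [CommSemiring R] [Semiring A] [Algebra R A]

theorem aeval_units_inv_reflect_mul_pow (u : Aˣ) (N : ℕ) (f : R[X]) (hf : f.natDegree ≤ N) :
    aeval (↑u⁻¹ : A) (reflect N f) * (u : A) ^ N = aeval (u : A) f := by
  refine induction_with_natDegree_le
    (fun f => aeval (↑u⁻¹ : A) (reflect N f) * (u : A) ^ N = aeval (u : A) f) N ?_ ?_ ?_ f hf
  · simp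
  · intro n r _ hnN
    have hpow : (↑u⁻¹ : A) ^ (N - n) * (u : A) ^ N = (u : A) ^ n := by
      rw [← Units.val_pow_eq_pow_val, ← Units.val_pow_eq_pow_val, ← Units.val_pow_eq_pow_val,
        ← Units.val_mul, inv_pow, ← Nat.sub_add_cancel hnN, pow_add, Nat.add_sub_cancel,
        inv_mul_cancel_left]
    simp only [reflect_C_mul_X_pow, revAt_le hnN, map_mul, aeval_C, map_pow, aeval_X, mul_assoc,
      hpow]
  · intro f g _ _ hf hg
    rw [reflect_add, map_add, add_mul, hf, hg, map_add]

theorem aeval_reverse_eq_zero_of_aeval_inv_eq_zero {u : Aˣ} {q : R[X]}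
    (hq : aeval (↑u⁻¹ : A) q = 0) : aeval (u : A) q.reverse = 0 := by
  have h := aeval_units_inv_reflect_mul_pow u⁻¹ q.natDegree q le_rfl
  rw [inv_inv, hq] at h
  exact ((Units.isUnit u⁻¹).pow _).mul_left_eq_zero.mp h

end Semiring

variable {R A : Type*} [CommRing R] [Nontrivial R] [Ring A] [Algebra R A]

theorem exists_monic_aeval_eq_zero_coeff_zero_eq {x : A} (hx : IsIntegral R x)
    {h : R[X]} (hh : aeval x h = 0) :
    ∃ f : R[X], f.Monic ∧ 0 < f.natDegree ∧ f.coeff 0 = h.coeff 0 ∧ aeval x f = 0 := by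
  obtain ⟨p, hpm, hp⟩ := hx
  set g := p * X ^ (h.natDegree + 1)
  have hgm : g.Monic := hpm.mul (monic_X_pow _)
  have hgdeg : g.natDegree = p.natDegree + (h.natDegree + 1) := by
    rw [hpm.natDegree_mul (monic_X_pow _), natDegree_X_pow]
  have hlt : h.degree < g.degree := degree_lt_degree (by omega)
  refine ⟨g + h, hgm.add_of_left hlt, ?_, ?_, ?_⟩
  · rw [natDegree_add_eq_left_of_degree_lt hlt, hgdeg]; omega
  · rw [coeff_add, coeff_mul_X_pow', if_neg (by omega), zero_add]
  · rw [map_add, map_mul, aeval_def, hp, zero_mul, zero_add, hh]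

end Polynomial

/-- The algebraic core of Lemma 6.1: if `E` is an algebra over a commutative ring `Z`
that is finitely generated as a `Z`-module, then every unit `u` of `E` is annihilated
by a monic polynomial over `Z` of degree `d ≥ 1` whose constant coefficient is a unit
of `Z`. -/
theorem unit_satisfies_monic_poly_with_unit_constant
    (Z : Type*) [CommRing Z] (E : Type*) [Ring E] [Algebra Z E]
    [Module.Finite Z E] (u : Eˣ) :
    ∃ (d : ℕ) (b : ℕ → Z), 1 ≤ d ∧ IsUnit (b 0) ∧
      (u : E) ^ d + ∑ k ∈ Finset.range d, b k • (u : E) ^ k = 0 := by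
  rcases subsingleton_or_nontrivial Z with hZ | hZ
  · have : Subsingleton E := Module.subsingleton Z E
    exact ⟨1, fun _ => 1, le_rfl, isUnit_one, Subsingleton.elim _ _⟩
  obtain ⟨q, hqm, hq⟩ := IsIntegral.of_finite Z (↑u⁻¹ : E)
  obtain ⟨f, hfm, hfdeg, hf0, hf⟩ := exists_monic_aeval_eq_zero_coeff_zero_eq
    (IsIntegral.of_finite Z (u : E)) (aeval_reverse_eq_zero_of_aeval_inv_eq_zero hq)
  refine ⟨f.natDegree, f.coeff, hfdeg, ?_, ?_⟩
  · rw [hf0, coeff_zero_reverse, hqm.leadingCoeff]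
    exact isUnit_one
  · rw [hfm.as_sum] at hf
    simpa only [map_add, map_sum, map_mul, map_pow, aeval_X, aeval_C, Algebra.smul_def] using hf
end

section
/- Let A be a commutative ring, Λ an additively written abelian group, R = A[Λ] the group algebra of Λ over A, V₀ an A-module, and φ an A-linear endomorphism of V₀. Suppose f(φ) = 0 where f(X) = X^d + b_{d−1}X^{d−1} + ⋯ + b₁X + b₀ ∈ A[X] is monic of degree d ≥ 1. Fix λ ∈ Λ and let Φ be the R-linear endomorphism of V = V₀ ⊗_A R determined by Φ(v ⊗ x) = φ(v) ⊗ (single(λ,1)·x). Then, setting b_d = 1, the endomorphism Σ_{k=0}^{d} single(−k·λ, b_k)·Φ^k of V is zero, where single(−k·λ, b_k) ∈ R acts through the R-module structure of V. -/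
open TensorProduct

/-- Lemma 6.2: let `R = A[Λ]`, let `φ` be an `A`-linear endomorphism of `V₀` killed by
a monic polynomial `f(X) = X^d + b_{d-1} X^{d-1} + ⋯ + b₀` (encoded by `b : ℕ → A` with
`b d = 1`), fix `λ ∈ Λ`, and let `Φ` be the `R`-linear endomorphism of `V₀ ⊗_A R`
determined by `v ⊗ x ↦ φ(v) ⊗ single(λ,1)·x`.  Then
`Σ_{k=0}^{d} single(−k·λ, b_k) • Φ^k = 0`. -/
theorem twisted_annihilating_polynomial
    (A : Type*) [CommRing A] (Λ : Type*) [AddCommGroup Λ]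
    (V₀ : Type*) [AddCommGroup V₀] [Module A V₀]
    (φ : Module.End A V₀) (d : ℕ) (hd : 1 ≤ d) (b : ℕ → A) (hbd : b d = 1)
    (hf : ∑ k ∈ Finset.range (d + 1), b k • φ ^ k = 0)
    (lam : Λ)
    (Φ : Module.End (AddMonoidAlgebra A Λ) ((AddMonoidAlgebra A Λ) ⊗[A] V₀))
    (hΦ : ∀ (x : AddMonoidAlgebra A Λ) (v : V₀),
      Φ (x ⊗ₜ[A] v) = (AddMonoidAlgebra.single lam (1 : A) * x) ⊗ₜ[A] φ v) :
    ∑ k ∈ Finset.range (d + 1),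
      (AddMonoidAlgebra.single (-(k • lam)) (b k) : AddMonoidAlgebra A Λ) • Φ ^ k = 0 := by
  have hpow : ∀ (k : ℕ) (x : AddMonoidAlgebra A Λ) (v : V₀),
      (Φ ^ k) (x ⊗ₜ[A] v)
        = (AddMonoidAlgebra.single (k • lam) (1 : A) * x) ⊗ₜ[A] ((φ ^ k) v) := by
    intro k
    induction k with
    | zero => intro x v; rw [pow_zero, pow_zero, Module.End.one_apply, zero_smul, ← AddMonoidAlgebra.one_def, one_mul, Module.End.one_apply]
    | succ n ih =>
      intro x v
      rw [pow_succ', Module.End.mul_apply, ih, hΦ, ← mul_assoc,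
        AddMonoidAlgebra.single_mul_single, one_mul, ← succ_nsmul', pow_succ',
        Module.End.mul_apply]
  apply LinearMap.ext
  intro z
  induction z with
  | zero => simp
  | tmul x v =>
    rw [LinearMap.sum_apply, LinearMap.zero_apply]
    have key : ∀ k ∈ Finset.range (d + 1),
        ((AddMonoidAlgebra.single (-(k • lam)) (b k) : AddMonoidAlgebra A Λ) • Φ ^ k)
          (x ⊗ₜ[A] v) = x ⊗ₜ[A] ((b k • φ ^ k) v) := by
      intro k _
      rw [LinearMap.smul_apply, hpow, smul_tmul', smul_eq_mul, ← mul_assoc,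
        AddMonoidAlgebra.single_mul_single, neg_add_cancel, mul_one]
      have h0 : (AddMonoidAlgebra.single (0 : Λ) (b k) : AddMonoidAlgebra A Λ)
          = algebraMap A (AddMonoidAlgebra A Λ) (b k) := by
        simp [AddMonoidAlgebra.coe_algebraMap]
      rw [h0, ← Algebra.smul_def, smul_tmul]
      rfl
    rw [Finset.sum_congr rfl key, ← TensorProduct.tmul_sum,
      show (∑ k ∈ Finset.range (d + 1), (b k • φ ^ k) v)
        = (∑ k ∈ Finset.range (d + 1), b k • φ ^ k) v by
          rw [LinearMap.sum_apply],
      hf, LinearMap.zero_apply, TensorProduct.tmul_zero]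
  | add a c ha hc =>
    rw [LinearMap.zero_apply] at *
    rw [map_add, ha, hc, add_zero]
end

section
/- Let ℓ be a prime number and let C be a commutative ring equipped with an algebra structure over the ring ℤ_ℓ of ℓ-adic integers. Assume C is reduced and that the image of ℓ in C is a non-zero-divisor. If an element c ∈ C satisfies f(c) = 0 for every ring homomorphism f from C to every algebraically closed field of characteristic zero, then c = 0. -/
/-!
Since `C` is reduced, `0` is the intersection of the minimal primes `q` of `C`, so it suffices
to show `c ∈ q`. A minimal prime consists of zero divisors, so `ℓ ∉ q`; every prime
number `p ≠ ℓ` is a unit in `ℤ_ℓ`, hence nonzero in the domain `C ⧸ q`, which therefore has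
characteristic zero. The algebraic closure of its fraction field is then a characteristic-zero point of `C` whose
kernel is exactly `q`.
-/

universe u

open PadicInt

theorem PadicInt.isUnit_natCast_of_coprime {ℓ : ℕ} [Fact ℓ.Prime] {n : ℕ} (h : ℓ.Coprime n) :
    IsUnit (n : ℤ_[ℓ]) :=
  isUnit_iff.mpr (norm_natCast_eq_one_iff.mpr h)

theorem PadicInt.charZero_of_algebra_of_natCast_ne_zero (ℓ : ℕ) [hℓ : Fact ℓ.Prime]
    (D : Type*) [CommRing D] [IsDomain D] [Algebra ℤ_[ℓ] D] (h : (ℓ : D) ≠ 0) :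
    CharZero D := by
  obtain ⟨p, hp⟩ := CharP.exists D
  rcases CharP.char_is_prime_or_zero D p with hp_prime | rfl
  · by_cases hpℓ : p = ℓ
    · exact absurd (hpℓ ▸ CharP.cast_eq_zero D p) h
    · have hunit : IsUnit (p : D) := by
        simpa only [map_natCast] using (isUnit_natCast_of_coprime
          ((Nat.coprime_primes hℓ.out hp_prime).mpr (Ne.symm hpℓ))).map (algebraMap ℤ_[ℓ] D)
      exact absurd (CharP.cast_eq_zero D p ▸ hunit) not_isUnit_zero
  · exact CharP.charP_to_charZero D

theorem exists_injective_ringHom_to_isAlgClosed_charZero (D : Type u) [CommRing D] [IsDomain D]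
    [CharZero D] :
    ∃ (K : Type u) (_ : Field K) (_ : IsAlgClosed K) (_ : CharZero K) (f : D →+* K),
      Function.Injective f := by
  let F := FractionRing D
  have hF : Function.Injective (algebraMap D F) := IsFractionRing.injective D F
  have : CharZero F := charZero_of_injective_algebraMap hF
  have hK : Function.Injective (algebraMap F (AlgebraicClosure F)) :=
    (algebraMap F _).injective
  have : CharZero (AlgebraicClosure F) := charZero_of_injective_algebraMap hK
  exact ⟨AlgebraicClosure F, inferInstance, inferInstance, inferInstance,
    (algebraMap F _).comp (algebraMap D F), hK.comp hF⟩

/-- The density-of-characteristic-zero-points argument at the end of the proof of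
Theorem 10.4: if `C` is a reduced `ℤ_ℓ`-algebra in which (the image of) `ℓ` is a
non-zero-divisor, then an element of `C` vanishing under every ring homomorphism to
every algebraically closed field of characteristic zero is zero. -/
theorem eq_zero_of_vanishing_at_char_zero_points
    (ℓ : ℕ) [Fact (Nat.Prime ℓ)] (C : Type u) [CommRing C]
    [Algebra (PadicInt ℓ) C] [IsReduced C]
    (hℓ : algebraMap (PadicInt ℓ) C (ℓ : PadicInt ℓ) ∈ nonZeroDivisors C)
    (c : C)
    (h : ∀ (K : Type u), ∀ (_ : Field K) (_ : IsAlgClosed K) (_ : CharZero K)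
      (f : C →+* K), f c = 0) :
    c = 0 := by
  suffices c ∈ sInf (minimalPrimes C) by
    rwa [minimalPrimes, Ideal.sInf_minimalPrimes, Ideal.radical_bot_of_isReduced,
      Ideal.mem_bot] at this
  refine Ideal.mem_sInf.mpr fun q hq => ?_
  have := hq.isPrime
  have hℓq : (ℓ : C ⧸ q) ≠ 0 := by
    rw [← map_natCast (Ideal.Quotient.mk q), Ne, Ideal.Quotient.eq_zero_iff_mem,
      ← map_natCast (algebraMap ℤ_[ℓ] C)]
    exact fun hmem => notMem_nonZeroDivisors_of_mem_mem_minimalPrimes hmem hq hℓ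
  have := PadicInt.charZero_of_algebra_of_natCast_ne_zero ℓ (C ⧸ q) hℓq
  obtain ⟨K, _, _, _, f, hf⟩ := exists_injective_ringHom_to_isAlgClosed_charZero (C ⧸ q)
  rw [← Ideal.Quotient.eq_zero_iff_mem, ← map_eq_zero_iff f hf]
  exact h K ‹_› ‹_› ‹_› (f.comp (Ideal.Quotient.mk q))
end
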